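/- Consider the GRCD method x^{k+1} = x^k + (‖S_kᵀ Aᵀ r^k‖₂²/‖A S_k S_kᵀ Aᵀ r^k‖₂²) S_k S_kᵀ Aᵀ r^k applied to min ‖Ax − b‖₂², where r^k = b − Ax^k and S_k ∼ 𝒟 with 𝔼[S Sᵀ] positive definite. Then 𝔼[‖x^{k+1} − x*‖²_{AᵀA} | x^k] ≤ (1 − σ²_min(AM^{1/2})) ‖x^k − x*‖²_{AᵀA}, where M = 𝔼[SSᵀ/‖AS‖₂²] and x* is any least-squares solution. -/

import Mathlib

open Matrix

/-!
Each GRCD step is an exact line search along `A S Sᵀ g`, where `g = -AᵀA e` and `e = x − x*`,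
so it lowers `‖A e‖²` by `‖Sᵀ g‖⁴ / ‖A S Sᵀ g‖² ≥ ‖Sᵀ g‖² / ‖A S‖²`. Averaging over `S`, the
expected decrease is `gᵀ M g = ‖(A M^{1/2})ᵀ A e‖²`. Because `𝔼[S Sᵀ]` is definite, `M` is definite
on `range Aᵀ`, hence `A e` lies in the range of `A M^{1/2}`, where this quadratic form is at least
`σ²_min(A M^{1/2}) ‖A e‖²`.
-/

noncomputable def Matrix.PosSemidef.sqrt {n : Type*} [Fintype n] [DecidableEq n]
    {A : Matrix n n ℝ} (hA : A.PosSemidef) : Matrix n n ℝ :=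
  hA.1.eigenvectorUnitary.1 * diagonal ((↑) ∘ (√·) ∘ hA.1.eigenvalues) *
  (star hA.1.eigenvectorUnitary : Matrix n n ℝ)

/-- Squared spectral (ℓ2 operator) norm of a real matrix. -/
noncomputable def opNormSq {a b : ℕ} (B : Matrix (Fin a) (Fin b) ℝ) : ℝ :=
  sSup {t : ℝ | ∃ v : Fin b → ℝ, v ⬝ᵥ v = 1 ∧ t = B.mulVec v ⬝ᵥ B.mulVec v}

/-- Squared smallest nonzero singular value of a real matrix. -/
noncomputable def sigmaMinSq {a b : ℕ} (B : Matrix (Fin a) (Fin b) ℝ) : ℝ :=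
  sInf {t : ℝ | ∃ v : Fin b → ℝ, (∃ u : Fin a → ℝ, Bᵀ.mulVec u = v) ∧
    v ⬝ᵥ v = 1 ∧ t = B.mulVec v ⬝ᵥ B.mulVec v}

section DotProduct

variable {m n : Type*} [Fintype m] [Fintype n]

lemma dotProduct_self_nonneg (v : n → ℝ) : 0 ≤ v ⬝ᵥ v :=
  Finset.sum_nonneg fun i _ => mul_self_nonneg (v i)

lemma dotProduct_sq_le (v w : n → ℝ) : (v ⬝ᵥ w) ^ 2 ≤ (v ⬝ᵥ v) * (w ⬝ᵥ w) := by
  simpa [dotProduct, sq] using Finset.sum_mul_sq_le_sq_mul_sq Finset.univ v w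

lemma dotProduct_mul_transpose_mulVec (S : Matrix n m ℝ) (z : n → ℝ) :
    z ⬝ᵥ (S * Sᵀ) *ᵥ z = Sᵀ *ᵥ z ⬝ᵥ Sᵀ *ᵥ z := by
  rw [← mulVec_mulVec, dotProduct_mulVec, ← mulVec_transpose]

lemma dotProduct_sum_smul_mul_transpose_mulVec {ι : Type*} [Fintype ι] (c : ι → ℝ)
    (S : ι → Matrix n m ℝ) (z : n → ℝ) :
    z ⬝ᵥ (∑ i, c i • (S i * (S i)ᵀ)) *ᵥ z = ∑ i, c i * ((S i)ᵀ *ᵥ z ⬝ᵥ (S i)ᵀ *ᵥ z) := by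
  simp only [sum_mulVec, dotProduct_sum, smul_mulVec, dotProduct_smul, smul_eq_mul,
    dotProduct_mul_transpose_mulVec]

/-- `c / ‖z‖²` is the exact line-search step; for `z = 0` it is the junk value `0`, and then both
sides are `‖y‖²`. -/
lemma dotProduct_self_add_div_smul (y z : n → ℝ) (c : ℝ) (hyz : y ⬝ᵥ z = -c) :
    (y + (c / (z ⬝ᵥ z)) • z) ⬝ᵥ (y + (c / (z ⬝ᵥ z)) • z) = y ⬝ᵥ y - c ^ 2 / (z ⬝ᵥ z) := by
  rcases eq_or_ne (z ⬝ᵥ z) 0 with hz | hz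
  · simp [hz]
  · simp only [add_dotProduct, dotProduct_add, smul_dotProduct, dotProduct_smul, smul_eq_mul,
      dotProduct_comm z y, hyz]
    field_simp
    ring

lemma dotProduct_self_add_div_smul_le (y z : n → ℝ) {c N : ℝ} (hyz : y ⬝ᵥ z = -c)
    (hc : 0 ≤ c) (hzN : z ⬝ᵥ z ≤ N * c) :
    (y + (c / (z ⬝ᵥ z)) • z) ⬝ᵥ (y + (c / (z ⬝ᵥ z)) • z) ≤ y ⬝ᵥ y - c / N := by
  rw [dotProduct_self_add_div_smul y z c hyz, sub_le_sub_iff_left]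
  rcases hc.eq_or_lt with rfl | hc
  · simp
  have hz : 0 < z ⬝ᵥ z := by
    refine (dotProduct_self_nonneg z).lt_of_ne' fun hz => hc.ne' ?_
    rw [← neg_eq_zero, ← hyz, dotProduct_self_eq_zero.mp hz, dotProduct_zero]
  have hN : 0 < N := pos_of_mul_pos_left (hz.trans_le hzN) hc.le
  calc c / N = c ^ 2 / (N * c) := by field_simp
    _ ≤ c ^ 2 / (z ⬝ᵥ z) := by gcongr

lemma exists_mulVec_transpose_mulVec_eq (B : Matrix m n ℝ) (y : m → ℝ)
    (hy : ∀ v, Bᵀ *ᵥ v = 0 → y ⬝ᵥ v = 0) : ∃ u, B *ᵥ (Bᵀ *ᵥ u) = y := by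
  classical
  set L := toEuclideanLin B
  have hadj : L.adjoint = toEuclideanLin Bᵀ := by
    rw [← toEuclideanLin_conjTranspose_eq_adjoint, conjTranspose_eq_transpose_of_trivial]
  have hrange : (L ∘ₗ L.adjoint).range = (LinearMap.ker L.adjoint)ᗮ := by
    rw [LinearMap.range_self_comp_adjoint, LinearMap.orthogonal_ker, LinearMap.adjoint_adjoint]
  have hmem : WithLp.toLp 2 y ∈ (L ∘ₗ L.adjoint).range := by
    rw [hrange, Submodule.mem_orthogonal]
    intro v hv
    rw [LinearMap.mem_ker, hadj] at hv
    simpa [PiLp.inner_apply, dotProduct, mul_comm] using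
      hy v (by simpa using congrArg WithLp.ofLp hv)
  obtain ⟨u, hu⟩ := hmem
  exact ⟨u, by simpa [L, hadj] using congrArg WithLp.ofLp hu⟩

lemma exists_smul_dotProduct_self_eq_one (B : Matrix m n ℝ) {w : n → ℝ} (hw : w ≠ 0) :
    ∃ c : ℝ, (c • w) ⬝ᵥ (c • w) = 1 ∧
      B *ᵥ w ⬝ᵥ B *ᵥ w = (B *ᵥ (c • w) ⬝ᵥ B *ᵥ (c • w)) * (w ⬝ᵥ w) := by
  have hpos : 0 < w ⬝ᵥ w := (dotProduct_self_nonneg w).lt_of_ne' (by simpa using hw)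
  have hc : (√(w ⬝ᵥ w))⁻¹ ^ 2 * (w ⬝ᵥ w) = 1 := by
    rw [inv_pow, Real.sq_sqrt hpos.le, inv_mul_cancel₀ hpos.ne']
  refine ⟨(√(w ⬝ᵥ w))⁻¹, ?_, ?_⟩ <;>
    simp only [mulVec_smul, smul_dotProduct, dotProduct_smul, smul_eq_mul]
  · linear_combination hc
  · linear_combination (-(B *ᵥ w ⬝ᵥ B *ᵥ w)) * hc

end DotProduct

namespace Matrix.PosSemidef

variable {n : Type*} [Fintype n] [DecidableEq n] {M : Matrix n n ℝ}

lemma sqrt_transpose (h : M.PosSemidef) : h.sqrtᵀ = h.sqrt := by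
  simp [sqrt, transpose_mul, Matrix.star_eq_conjTranspose, Matrix.mul_assoc]

lemma sqrt_mul_self (h : M.PosSemidef) : h.sqrt * h.sqrt = M := by
  have hU : (star h.1.eigenvectorUnitary : Matrix n n ℝ) * h.1.eigenvectorUnitary.1 = 1 :=
    Matrix.mem_unitaryGroup_iff'.mp h.1.eigenvectorUnitary.2
  calc h.sqrt * h.sqrt = h.1.eigenvectorUnitary.1 * (diagonal ((↑) ∘ (√·) ∘ h.1.eigenvalues) *
        ((star h.1.eigenvectorUnitary : Matrix n n ℝ) * h.1.eigenvectorUnitary.1) *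
        diagonal ((↑) ∘ (√·) ∘ h.1.eigenvalues)) *
        (star h.1.eigenvectorUnitary : Matrix n n ℝ) := by
          simp only [sqrt, Matrix.mul_assoc]
    _ = M := by
      rw [hU, Matrix.mul_one, diagonal_mul_diagonal]
      conv_rhs => rw [h.1.spectral_theorem]
      congr 3
      ext i
      simp [Real.mul_self_sqrt (h.eigenvalues_nonneg i)]

lemma mul_sqrt_transpose_mulVec_dotProduct_self {m : Type*} [Fintype m] (h : M.PosSemidef)
    (A : Matrix m n ℝ) (y : m → ℝ) :
    (A * h.sqrt)ᵀ *ᵥ y ⬝ᵥ (A * h.sqrt)ᵀ *ᵥ y = Aᵀ *ᵥ y ⬝ᵥ M *ᵥ (Aᵀ *ᵥ y) := by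
  rw [transpose_mul, ← mulVec_mulVec, ← dotProduct_mul_transpose_mulVec,
    h.sqrt_transpose, h.sqrt_mul_self]

end Matrix.PosSemidef

section SingularValues

variable {a b : ℕ} (B : Matrix (Fin a) (Fin b) ℝ)

lemma opNormSq_nonneg : 0 ≤ opNormSq B :=
  Real.sSup_nonneg (by rintro t ⟨v, -, rfl⟩; exact dotProduct_self_nonneg _)

lemma sigmaMinSq_nonneg : 0 ≤ sigmaMinSq B :=
  Real.sInf_nonneg (by rintro t ⟨v, -, -, rfl⟩; exact dotProduct_self_nonneg _)

lemma bddAbove_opNormSq_set :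
    BddAbove {t : ℝ | ∃ v : Fin b → ℝ, v ⬝ᵥ v = 1 ∧ t = B *ᵥ v ⬝ᵥ B *ᵥ v} := by
  refine ⟨∑ i, B i ⬝ᵥ B i, ?_⟩
  rintro t ⟨v, hv, rfl⟩
  calc B *ᵥ v ⬝ᵥ B *ᵥ v = ∑ i, (B i ⬝ᵥ v) ^ 2 := Finset.sum_congr rfl fun i _ => (sq _).symm
    _ ≤ ∑ i, (B i ⬝ᵥ B i) * (v ⬝ᵥ v) := Finset.sum_le_sum fun i _ => dotProduct_sq_le _ _
    _ = ∑ i, B i ⬝ᵥ B i := by simp [hv]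

lemma mulVec_dotProduct_self_le_opNormSq_mul (w : Fin b → ℝ) :
    B *ᵥ w ⬝ᵥ B *ᵥ w ≤ opNormSq B * (w ⬝ᵥ w) := by
  rcases eq_or_ne w 0 with rfl | hw
  · simp
  obtain ⟨c, hc, hBw⟩ := exists_smul_dotProduct_self_eq_one B hw
  rw [hBw]
  gcongr
  · exact dotProduct_self_nonneg w
  · exact le_csSup (bddAbove_opNormSq_set B) ⟨c • w, hc, rfl⟩

lemma eq_zero_of_opNormSq_eq_zero (h : opNormSq B = 0) : B = 0 := by
  refine ext_iff_mulVec.mpr fun w => ?_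
  have hw := mulVec_dotProduct_self_le_opNormSq_mul B w
  rw [h, zero_mul] at hw
  simpa using le_antisymm hw (dotProduct_self_nonneg _)

lemma sigmaMinSq_mul_le {w : Fin b → ℝ} (hw : ∃ u, Bᵀ *ᵥ u = w) :
    sigmaMinSq B * (w ⬝ᵥ w) ≤ B *ᵥ w ⬝ᵥ B *ᵥ w := by
  rcases eq_or_ne w 0 with rfl | hw0
  · simp
  obtain ⟨c, hc, hBw⟩ := exists_smul_dotProduct_self_eq_one B hw0
  obtain ⟨u, rfl⟩ := hw
  rw [hBw]
  gcongr
  · exact dotProduct_self_nonneg _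
  · refine csInf_le ⟨0, ?_⟩ ⟨c • Bᵀ *ᵥ u, ⟨c • u, mulVec_smul _ _ _⟩, hc, rfl⟩
    rintro t ⟨v, -, -, rfl⟩
    exact dotProduct_self_nonneg _

/-- Write `y = B v` with `v ∈ range Bᵀ`. Cauchy–Schwarz gives `‖B v‖⁴ ≤ ‖v‖² ‖Bᵀ B v‖²`, and
`σ ‖v‖² ≤ ‖B v‖²`. -/
lemma sigmaMinSq_mul_le_transpose_mulVec {y : Fin a → ℝ}
    (hy : ∀ v, Bᵀ *ᵥ v = 0 → y ⬝ᵥ v = 0) :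
    sigmaMinSq B * (y ⬝ᵥ y) ≤ Bᵀ *ᵥ y ⬝ᵥ Bᵀ *ᵥ y := by
  obtain ⟨u, rfl⟩ := exists_mulVec_transpose_mulVec_eq B y hy
  set v := Bᵀ *ᵥ u
  set p := B *ᵥ v ⬝ᵥ B *ᵥ v
  set q := Bᵀ *ᵥ (B *ᵥ v) ⬝ᵥ Bᵀ *ᵥ (B *ᵥ v)
  have hcs : p ^ 2 ≤ (v ⬝ᵥ v) * q := by
    have hp : v ⬝ᵥ Bᵀ *ᵥ (B *ᵥ v) = p := by rw [dotProduct_mulVec, vecMul_transpose]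
    simpa only [hp] using dotProduct_sq_le v (Bᵀ *ᵥ (B *ᵥ v))
  have hv : sigmaMinSq B * (v ⬝ᵥ v) ≤ p := sigmaMinSq_mul_le B ⟨u, rfl⟩
  obtain hp | hp : 0 = p ∨ 0 < p := (dotProduct_self_nonneg _).eq_or_lt
  · rw [← hp, mul_zero]
    exact dotProduct_self_nonneg _
  refine le_of_mul_le_mul_right ?_ hp
  calc sigmaMinSq B * p * p = sigmaMinSq B * p ^ 2 := by ring
    _ ≤ sigmaMinSq B * ((v ⬝ᵥ v) * q) := by gcongr; exact sigmaMinSq_nonneg B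
    _ = sigmaMinSq B * (v ⬝ᵥ v) * q := by ring
    _ ≤ p * q := by gcongr; exact dotProduct_self_nonneg _
    _ = q * p := mul_comm _ _

end SingularValues

section GRCD

variable {n d q : ℕ} (A : Matrix (Fin n) (Fin d) ℝ)

lemma grcd_step_le (S : Matrix (Fin d) (Fin q) ℝ) (e g : Fin d → ℝ)
    (hg : Aᵀ *ᵥ (A *ᵥ e) = -g) :
    let w := Sᵀ *ᵥ g
    let u := S *ᵥ w
    A *ᵥ (e + ((w ⬝ᵥ w) / (A *ᵥ u ⬝ᵥ A *ᵥ u)) • u) ⬝ᵥ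
        A *ᵥ (e + ((w ⬝ᵥ w) / (A *ᵥ u ⬝ᵥ A *ᵥ u)) • u) ≤
      A *ᵥ e ⬝ᵥ A *ᵥ e - (w ⬝ᵥ w) / opNormSq (A * S) := by
  intro w u
  rw [mulVec_add, mulVec_smul]
  refine dotProduct_self_add_div_smul_le _ _ ?_ (dotProduct_self_nonneg w) ?_
  · rw [dotProduct_mulVec, ← mulVec_transpose, hg, neg_dotProduct, dotProduct_mulVec,
      ← mulVec_transpose]
  · rw [mulVec_mulVec]
    exact mulVec_dotProduct_self_le_opNormSq_mul (A * S) w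

/-- Sketches with `A S = 0` contribute nothing to `M`, but they also see nothing of `range Aᵀ`;
so `M` is still definite on `range Aᵀ` because `𝔼[S Sᵀ]` is. -/
lemma transpose_mulVec_eq_zero_of_dotProduct_mulVec_eq_zero {ι : Type*} [Fintype ι]
    {prob : ι → ℝ} (hprob : ∀ i, 0 ≤ prob i) {S : ι → Matrix (Fin d) (Fin q) ℝ}
    (hE : (∑ i, prob i • (S i * (S i)ᵀ)).PosDef) {v : Fin n → ℝ}
    (hv : Aᵀ *ᵥ v ⬝ᵥ (∑ i, (prob i / opNormSq (A * S i)) • (S i * (S i)ᵀ)) *ᵥ (Aᵀ *ᵥ v) = 0) :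
    Aᵀ *ᵥ v = 0 := by
  set z := Aᵀ *ᵥ v
  rw [dotProduct_sum_smul_mul_transpose_mulVec, Finset.sum_eq_zero_iff_of_nonneg fun i _ =>
    mul_nonneg (div_nonneg (hprob i) (opNormSq_nonneg _)) (dotProduct_self_nonneg _)] at hv
  have hterm : ∀ i, prob i * ((S i)ᵀ *ᵥ z ⬝ᵥ (S i)ᵀ *ᵥ z) = 0 := by
    intro i
    rcases eq_or_ne (opNormSq (A * S i)) 0 with hN | hN
    · rw [mulVec_mulVec, ← transpose_mul, eq_zero_of_opNormSq_eq_zero _ hN]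
      simp
    · rcases mul_eq_zero.mp (hv i (Finset.mem_univ i)) with h | h
      · simp [(div_eq_zero_iff.mp h).resolve_right hN]
      · simp [h]
  by_contra hz
  simpa [dotProduct_sum_smul_mul_transpose_mulVec, hterm] using hE.dotProduct_mulVec_pos hz

end GRCD

/-- One-step expected contraction of the GRCD method (equation (GRCD_rate)):
`𝔼[‖x^{k+1}−x*‖²_{AᵀA} | x^k] ≤ (1 − σ²_min(A M^{1/2})) ‖x^k−x*‖²_{AᵀA}`. -/
theorem stmt13 {n d q : ℕ} {ι : Type*} [Fintype ι]
    (A : Matrix (Fin n) (Fin d) ℝ) (b : Fin n → ℝ)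
    (xstar : Fin d → ℝ) (hstar : Aᵀ.mulVec (A.mulVec xstar) = Aᵀ.mulVec b)
    (prob : ι → ℝ) (hprob : ∀ i, 0 ≤ prob i) (hsum : ∑ i, prob i = 1)
    (S : ι → Matrix (Fin d) (Fin q) ℝ)
    (hE : (∑ i, prob i • (S i * (S i)ᵀ)).PosDef)
    (hMpsd : (∑ i, (prob i / opNormSq (A * S i)) • (S i * (S i)ᵀ)).PosSemidef)
    (xk : Fin d → ℝ) :
    let rk := b - A.mulVec xk
    let w : ι → (Fin q → ℝ) := fun i => (S i)ᵀ.mulVec (Aᵀ.mulVec rk)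
    let u : ι → (Fin d → ℝ) := fun i => (S i).mulVec (w i)
    let xnext : ι → (Fin d → ℝ) := fun i =>
      xk + ((w i ⬝ᵥ w i) / (A.mulVec (u i) ⬝ᵥ A.mulVec (u i))) • u i
    ∑ i, prob i * (A.mulVec (xnext i - xstar) ⬝ᵥ A.mulVec (xnext i - xstar)) ≤
      (1 - sigmaMinSq (A * hMpsd.sqrt)) *
        (A.mulVec (xk - xstar) ⬝ᵥ A.mulVec (xk - xstar)) := by
  intro rk w u xnext
  set e := xk - xstar
  set g := Aᵀ *ᵥ rk
  set B := A * hMpsd.sqrt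
  have hg : Aᵀ *ᵥ (A *ᵥ e) = -g := by
    simp only [e, g, rk, mulVec_sub, hstar]
    abel
  have hB : Bᵀ *ᵥ (A *ᵥ e) ⬝ᵥ Bᵀ *ᵥ (A *ᵥ e) =
      ∑ i, prob i * ((w i ⬝ᵥ w i) / opNormSq (A * S i)) := by
    rw [hMpsd.mul_sqrt_transpose_mulVec_dotProduct_self, hg, mulVec_neg, dotProduct_neg,
      neg_dotProduct, neg_neg, dotProduct_sum_smul_mul_transpose_mulVec]
    exact Finset.sum_congr rfl fun i _ => by rw [div_mul_eq_mul_div, mul_div_assoc]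
  have hker : ∀ v, Bᵀ *ᵥ v = 0 → A *ᵥ e ⬝ᵥ v = 0 := by
    intro v hv
    have hAv : Aᵀ *ᵥ v = 0 := transpose_mulVec_eq_zero_of_dotProduct_mulVec_eq_zero A hprob hE
      (by rw [← hMpsd.mul_sqrt_transpose_mulVec_dotProduct_self, hv, dotProduct_zero])
    rw [dotProduct_comm, dotProduct_mulVec, ← mulVec_transpose, hAv, zero_dotProduct]
  calc ∑ i, prob i * (A *ᵥ (xnext i - xstar) ⬝ᵥ A *ᵥ (xnext i - xstar))
      ≤ ∑ i, prob i * (A *ᵥ e ⬝ᵥ A *ᵥ e - (w i ⬝ᵥ w i) / opNormSq (A * S i)) := by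
        refine Finset.sum_le_sum fun i _ => mul_le_mul_of_nonneg_left ?_ (hprob i)
        rw [show xnext i - xstar = e + _ • u i from add_sub_right_comm _ _ _]
        exact grcd_step_le A (S i) e g hg
    _ = A *ᵥ e ⬝ᵥ A *ᵥ e - Bᵀ *ᵥ (A *ᵥ e) ⬝ᵥ Bᵀ *ᵥ (A *ᵥ e) := by
        simp only [mul_sub, Finset.sum_sub_distrib, ← Finset.sum_mul, hsum, one_mul, hB]
    _ ≤ (1 - sigmaMinSq B) * (A *ᵥ e ⬝ᵥ A *ᵥ e) := by
        linarith [sigmaMinSq_mul_le_transpose_mulVec B hker]
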